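/- Let δ > 0, c > 0, L > 0, C₀ > 0, E₀ ∈ ℝ, and let V₁, V₂, r₀ be smooth real-valued functions on a neighborhood of I := [−δ,δ] such that E₀ − V_j(x) ≥ c on I for j = 1,2, V₁(x) = V₂(x) holds for x ∈ I only at x = 0, and min{k ≥ 1 : V₁^{(k)}(0) ≠ V₂^{(k)}(0)} is finite. Then there exist h₀ > 0 and C > 0 such that the following holds for all h ∈ (0,h₀], all E ∈ ℂ with |E − E₀| ≤ Lh, all endpoints s₂, t₂ ∈ [−δ, −δ/2], and all solutions u₁, u₂, ŭ₂ of the respective equations −h²u'' + V_j u = Eu on I satisfying, with φ_j(x) := ∫_0^x (E − V_j(t))^{1/2} dt, the bounds |u_j(x)(E−V_j(x))^{1/4} e^{−iφ_j(x)/h} − 1| ≤ C₀h and |ŭ₂(x)(E−V₂(x))^{1/4} e^{iφ₂(x)/h} − 1| ≤ C₀h on I together with ŭ₂u₂' − ŭ₂'u₂ = 2i/h: the function K̃₂u₁(x) := (i/2) ( ŭ₂(x) ∫_{s₂}^x r₀(y) u₂(y) u₁(y) dy − u₂(x) ∫_{t₂}^x r₀(y) ŭ₂(y) u₁(y) dy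 ) satisfies sup_{x ∈ [−δ, −δ/2]} |K̃₂u₁(x)| ≤ C h. -/

import Mathlib

open MeasureTheory Set

private lemma sq_cpow_half (w : ℂ) : (w ^ ((1:ℂ)/2)) ^ 2 = w := by
  have h : ((1:ℂ)/2) = ((2:ℂ))⁻¹ := by norm_num
  rw [h]
  exact_mod_cast Complex.cpow_ofNat_inv_pow w 2

private lemma im_cpow_half_le {w : ℂ} {a : ℝ} (ha : 0 < a) (hre : a ≤ w.re) :
    |(w ^ ((1:ℂ)/2)).im| ≤ |w.im| / (2 * Real.sqrt a) := by
  set s := w ^ ((1:ℂ)/2) with hs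
  have hsq : s ^ 2 = w := sq_cpow_half w
  have hre' : s.re ^ 2 - s.im ^ 2 = w.re := by
    rw [← hsq]; simp [pow_two, Complex.mul_re]
  have him : 2 * (s.re * s.im) = w.im := by
    rw [← hsq]; simp [pow_two, Complex.mul_im]; ring
  have h1 : a ≤ s.re ^ 2 := by nlinarith [sq_nonneg s.im]
  have h2 : Real.sqrt a ≤ |s.re| := by
    rw [← Real.sqrt_sq_eq_abs]
    exact Real.sqrt_le_sqrt h1
  have h3 : 0 < Real.sqrt a := Real.sqrt_pos.2 ha
  rw [le_div_iff₀ (by positivity)]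
  calc |s.im| * (2 * Real.sqrt a) ≤ |s.im| * (2 * |s.re|) := by
        have := abs_nonneg s.im
        nlinarith
    _ = |w.im| := by
        rw [← him, abs_mul, abs_mul, abs_of_pos (by norm_num : (0:ℝ) < 2)]
        ring

private lemma cpow_ne_zero' {w : ℂ} (hw : w ≠ 0) (c : ℂ) : w ^ c ≠ 0 := by
  simp [Complex.cpow_eq_zero_iff, hw]

/- the symbol functions -/
private noncomputable def wf (V : ℝ → ℝ) (p : ℝ × ℂ) : ℂ := p.2 - (V p.1 : ℂ)
private noncomputable def sbf (V : ℝ → ℝ) (p : ℝ × ℂ) : ℂ := wf V p ^ ((1:ℂ)/2)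
private noncomputable def qf (V : ℝ → ℝ) (p : ℝ × ℂ) : ℂ := (wf V p ^ ((1:ℂ)/4))⁻¹
private noncomputable def gf (r₀ V₁ V₂ : ℝ → ℝ) (p : ℝ × ℂ) : ℂ :=
  (r₀ p.1 : ℂ) * qf V₂ p * qf V₁ p
private noncomputable def Dfn (V₁ V₂ : ℝ → ℝ) (σ : ℝ) (p : ℝ × ℂ) : ℂ :=
  sbf V₁ p + (σ : ℂ) * sbf V₂ p
private noncomputable def Hfn (r₀ V₁ V₂ : ℝ → ℝ) (σ : ℝ) (p : ℝ × ℂ) : ℂ :=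
  gf r₀ V₁ V₂ p / (Complex.I * Dfn V₁ V₂ σ p)
private noncomputable def dsbf (V : ℝ → ℝ) (p : ℝ × ℂ) : ℂ :=
  ((1:ℂ)/2) * wf V p ^ ((1:ℂ)/2 - 1) * (-(Complex.ofReal (deriv V p.1)))
private noncomputable def dqf (V : ℝ → ℝ) (p : ℝ × ℂ) : ℂ :=
  -(((1:ℂ)/4) * wf V p ^ ((1:ℂ)/4 - 1) * (-(Complex.ofReal (deriv V p.1)))) / (wf V p ^ ((1:ℂ)/4)) ^ 2
private noncomputable def dgf (r₀ V₁ V₂ : ℝ → ℝ) (p : ℝ × ℂ) : ℂ :=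
  ((Complex.ofReal (deriv r₀ p.1)) * qf V₂ p + (r₀ p.1 : ℂ) * dqf V₂ p) * qf V₁ p
    + (r₀ p.1 : ℂ) * qf V₂ p * dqf V₁ p
private noncomputable def dDfn (V₁ V₂ : ℝ → ℝ) (σ : ℝ) (p : ℝ × ℂ) : ℂ :=
  dsbf V₁ p + (σ : ℂ) * dsbf V₂ p
private noncomputable def dHfn (r₀ V₁ V₂ : ℝ → ℝ) (σ : ℝ) (p : ℝ × ℂ) : ℂ :=
  (dgf r₀ V₁ V₂ p * (Complex.I * Dfn V₁ V₂ σ p)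
    - gf r₀ V₁ V₂ p * (Complex.I * dDfn V₁ V₂ σ p)) / (Complex.I * Dfn V₁ V₂ σ p) ^ 2

private lemma wf_re (V : ℝ → ℝ) (p : ℝ × ℂ) : (wf V p).re = p.2.re - V p.1 := by
  simp [wf]
private lemma wf_im (V : ℝ → ℝ) (p : ℝ × ℂ) : (wf V p).im = p.2.im := by
  simp [wf]
private lemma wf_ne {V : ℝ → ℝ} {p : ℝ × ℂ} (h : 0 < (wf V p).re) : wf V p ≠ 0 := by
  intro h0; rw [h0] at h; simp at h

section derivs
variable {U : Set ℝ} {V : ℝ → ℝ} {x : ℝ}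

private lemma hasDerivAt_wf (hUo : IsOpen U) (hV : ContDiffOn ℝ (⊤:ℕ∞) V U) (hx : x ∈ U)
    (E : ℂ) : HasDerivAt (fun t => wf V (t, E)) (-(Complex.ofReal (deriv V x))) x := by
  have hd : HasDerivAt V (deriv V x) x :=
    ((hV.differentiableOn (by simp)).differentiableAt (hUo.mem_nhds hx)).hasDerivAt
  have := (HasDerivAt.ofReal_comp hd).const_sub E
  simpa [wf] using this

private lemma hasDerivAt_sbf (hUo : IsOpen U) (hV : ContDiffOn ℝ (⊤:ℕ∞) V U) (hx : x ∈ U)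
    {E : ℂ} (hre : 0 < (wf V (x, E)).re) :
    HasDerivAt (fun t => sbf V (t, E)) (dsbf V (x, E)) x := by
  have h := ((Complex.hasStrictDerivAt_cpow_const (c := (1:ℂ)/2)
    (Complex.mem_slitPlane_iff.mpr (Or.inl hre))).hasDerivAt).comp x (hasDerivAt_wf hUo hV hx E)
  simpa [sbf, dsbf, Function.comp_def] using h

private lemma hasDerivAt_qf (hUo : IsOpen U) (hV : ContDiffOn ℝ (⊤:ℕ∞) V U) (hx : x ∈ U)
    {E : ℂ} (hre : 0 < (wf V (x, E)).re) :
    HasDerivAt (fun t => qf V (t, E)) (dqf V (x, E)) x := by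
  have h1 : HasDerivAt (fun t : ℝ => wf V (t, E) ^ ((1:ℂ)/4))
      (((1:ℂ)/4) * wf V (x, E) ^ ((1:ℂ)/4 - 1) * (-(Complex.ofReal (deriv V x)))) x := by
    have h := ((Complex.hasStrictDerivAt_cpow_const (c := (1:ℂ)/4)
      (Complex.mem_slitPlane_iff.mpr (Or.inl hre))).hasDerivAt).comp x (hasDerivAt_wf hUo hV hx E)
    simpa [Function.comp_def] using h
  have h2 := (hasDerivAt_inv (cpow_ne_zero' (wf_ne hre) ((1:ℂ)/4))).comp x h1
  have hfun : (fun t : ℝ => qf V (t, E)) = Inv.inv ∘ (fun t : ℝ => wf V (t, E) ^ ((1:ℂ)/4)) := by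
    funext t; simp [qf, Function.comp_def]
  rw [hfun]
  refine h2.congr_deriv ?_
  simp only [dqf]
  ring

end derivs

section conts
variable {U : Set ℝ} {V : ℝ → ℝ} {A : Set (ℝ × ℂ)}

private lemma contOn_coer {f : ℝ → ℝ} (hfc : ContinuousOn f U) (hA : ∀ p ∈ A, p.1 ∈ U) :
    ContinuousOn (fun p : ℝ × ℂ => (f p.1 : ℂ)) A := by
  have h1 : ContinuousOn (fun p : ℝ × ℂ => f p.1) A :=
    hfc.comp continuous_fst.continuousOn (fun p hp => hA p hp)
  exact Complex.continuous_ofReal.comp_continuousOn h1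

private lemma contOn_wf (hVc : ContinuousOn V U) (hA : ∀ p ∈ A, p.1 ∈ U) :
    ContinuousOn (wf V) A :=
  continuous_snd.continuousOn.sub (contOn_coer hVc hA)

private lemma contOn_cpow (hVc : ContinuousOn V U)
    (hA : ∀ p ∈ A, p.1 ∈ U ∧ 0 < (wf V p).re) (c : ℂ) :
    ContinuousOn (fun p => wf V p ^ c) A := fun p hp =>
  (continuousAt_cpow_const (Complex.mem_slitPlane_iff.mpr (Or.inl (hA p hp).2))).comp_continuousWithinAt
    ((contOn_wf hVc (fun q hq => (hA q hq).1)) p hp)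

private lemma contOn_sbf (hVc : ContinuousOn V U)
    (hA : ∀ p ∈ A, p.1 ∈ U ∧ 0 < (wf V p).re) : ContinuousOn (sbf V) A :=
  contOn_cpow hVc hA _

private lemma contOn_qf (hVc : ContinuousOn V U)
    (hA : ∀ p ∈ A, p.1 ∈ U ∧ 0 < (wf V p).re) : ContinuousOn (qf V) A :=
  (contOn_cpow hVc hA _).inv₀ (fun p hp => cpow_ne_zero' (wf_ne (hA p hp).2) _)

private lemma contOn_dsbf (hVc : ContinuousOn V U) (hVc' : ContinuousOn (deriv V) U)
    (hA : ∀ p ∈ A, p.1 ∈ U ∧ 0 < (wf V p).re) : ContinuousOn (dsbf V) A := by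
  unfold dsbf
  exact ((continuous_const.continuousOn.mul (contOn_cpow hVc hA _)).mul
    ((contOn_coer hVc' (fun p hp => (hA p hp).1)).neg))

private lemma contOn_dqf (hVc : ContinuousOn V U) (hVc' : ContinuousOn (deriv V) U)
    (hA : ∀ p ∈ A, p.1 ∈ U ∧ 0 < (wf V p).re) : ContinuousOn (dqf V) A := by
  unfold dqf
  apply ContinuousOn.div
  · exact ((continuous_const.continuousOn.mul (contOn_cpow hVc hA _)).mul
      ((contOn_coer hVc' (fun p hp => (hA p hp).1)).neg)).neg
  · exact (contOn_cpow hVc hA _).pow 2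
  · intro p hp
    exact pow_ne_zero _ (cpow_ne_zero' (wf_ne (hA p hp).2) _)

end conts

set_option maxHeartbeats 1000000 in
/-- Estimate (3.24) of the paper. -/
theorem stmt_15 (δ c L C₀ E₀ : ℝ) (hδ : 0 < δ) (hc : 0 < c) (hL : 0 < L) (hC₀ : 0 < C₀)
    (U : Set ℝ) (hUo : IsOpen U) (hIU : Icc (-δ) δ ⊆ U)
    (V₁ V₂ r₀ : ℝ → ℝ)
    (hV₁ : ContDiffOn ℝ (⊤ : ℕ∞) V₁ U) (hV₂ : ContDiffOn ℝ (⊤ : ℕ∞) V₂ U)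
    (hr₀ : ContDiffOn ℝ (⊤ : ℕ∞) r₀ U)
    (hE₁ : ∀ x ∈ Icc (-δ) δ, c ≤ E₀ - V₁ x) (hE₂ : ∀ x ∈ Icc (-δ) δ, c ≤ E₀ - V₂ x)
    (hcross : ∀ x ∈ Icc (-δ) δ, (V₁ x = V₂ x ↔ x = 0))
    (m : ℕ) (hm : 1 ≤ m)
    (hmin : ∀ k, 1 ≤ k → k < m → iteratedDeriv k V₁ 0 = iteratedDeriv k V₂ 0)
    (hm0 : iteratedDeriv m V₁ 0 ≠ iteratedDeriv m V₂ 0) :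
    ∃ h₀ > 0, ∃ C > 0, ∀ h ∈ Ioc (0:ℝ) h₀, ∀ E : ℂ, ‖(E - (E₀:ℂ))‖ ≤ L * h →
      ∀ s₂ ∈ Icc (-δ) (-δ/2), ∀ t₂ ∈ Icc (-δ) (-δ/2),
      ∀ u₁ u₂ ub₂ : ℝ → ℂ,
      ContinuousOn u₁ (Icc (-δ) δ) →
      ContinuousOn u₂ (Icc (-δ) δ) → ContinuousOn ub₂ (Icc (-δ) δ) →
      (∀ x ∈ Icc (-δ) δ, -(h:ℂ)^2 * deriv (deriv u₁) x + (V₁ x) * u₁ x = E * u₁ x) →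
      (∀ x ∈ Icc (-δ) δ, -(h:ℂ)^2 * deriv (deriv u₂) x + (V₂ x) * u₂ x = E * u₂ x) →
      (∀ x ∈ Icc (-δ) δ, -(h:ℂ)^2 * deriv (deriv ub₂) x + (V₂ x) * ub₂ x = E * ub₂ x) →
      (∀ x ∈ Icc (-δ) δ,
        ‖(u₁ x * (E - (V₁ x : ℂ)) ^ ((1:ℂ)/4) *
          Complex.exp (-Complex.I * (∫ t in (0:ℝ)..x, (E - (V₁ t : ℂ)) ^ ((1:ℂ)/2)) / (h:ℂ))
          - 1)‖ ≤ C₀ * h) →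
      (∀ x ∈ Icc (-δ) δ,
        ‖(u₂ x * (E - (V₂ x : ℂ)) ^ ((1:ℂ)/4) *
          Complex.exp (-Complex.I * (∫ t in (0:ℝ)..x, (E - (V₂ t : ℂ)) ^ ((1:ℂ)/2)) / (h:ℂ))
          - 1)‖ ≤ C₀ * h) →
      (∀ x ∈ Icc (-δ) δ,
        ‖(ub₂ x * (E - (V₂ x : ℂ)) ^ ((1:ℂ)/4) *
          Complex.exp (Complex.I * (∫ t in (0:ℝ)..x, (E - (V₂ t : ℂ)) ^ ((1:ℂ)/2)) / (h:ℂ))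
          - 1)‖ ≤ C₀ * h) →
      (∀ x ∈ Icc (-δ) δ, ub₂ x * deriv u₂ x - deriv ub₂ x * u₂ x = 2 * Complex.I / (h:ℂ)) →
      ∀ x ∈ Icc (-δ) (-δ/2),
        ‖((Complex.I / 2) *
          (ub₂ x * (∫ y in s₂..x, (r₀ y : ℂ) * u₂ y * u₁ y) -
            u₂ x * (∫ y in t₂..x, (r₀ y : ℂ) * ub₂ y * u₁ y)))‖ ≤ C * h := by
  clear hm hmin hm0
  have hδ2 : -δ ≤ -δ/2 := by linarith
  set h₀ : ℝ := min 1 (c/(2*L)) with hh₀def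
  have hh₀pos : 0 < h₀ := lt_min one_pos (by positivity)
  have hh₀le1 : h₀ ≤ 1 := min_le_left _ _
  have hLh₀ : L * h₀ ≤ c/2 := by
    have h1 : h₀ ≤ c/(2*L) := min_le_right _ _
    calc L * h₀ ≤ L * (c/(2*L)) := by nlinarith
      _ = c/2 := by field_simp
  set J : Set ℝ := Icc (-δ) (-δ/2) with hJdef
  have hJI : J ⊆ Icc (-δ) δ := Icc_subset_Icc le_rfl (by linarith)
  set B : Set ℂ := Metric.closedBall (E₀:ℂ) (L*h₀) with hBdef
  set K : Set (ℝ × ℂ) := J ×ˢ B with hKdef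
  set K' : Set (ℝ × ℂ) := (Icc (-δ) δ) ×ˢ B with hK'def
  have hKK' : K ⊆ K' := prod_mono hJI Subset.rfl
  have hKc : IsCompact K := IsCompact.prod isCompact_Icc (isCompact_closedBall _ _)
  have hKne : ((-δ : ℝ), (E₀:ℂ)) ∈ K := by
    refine ⟨⟨le_rfl, hδ2⟩, ?_⟩
    simp only [hBdef, Metric.mem_closedBall, dist_self]
    positivity
  -- real part lower bound on K'
  have hreK' : ∀ (V : ℝ → ℝ), (∀ y ∈ Icc (-δ) δ, c ≤ E₀ - V y) →
      ∀ p ∈ K', p.1 ∈ U ∧ c/2 ≤ (wf V p).re := by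
    intro V hEV p hp
    obtain ⟨hp1, hp2⟩ := hp
    refine ⟨hIU hp1, ?_⟩
    have h1 : ‖p.2 - E₀‖ ≤ L*h₀ := by
      simpa [hBdef, Complex.dist_eq] using hp2
    have h2 : |(p.2 - (E₀:ℂ)).re| ≤ L*h₀ := (Complex.abs_re_le_norm _).trans h1
    have h3 : (p.2 - (E₀:ℂ)).re = p.2.re - E₀ := by simp
    rw [h3] at h2
    have h4 := abs_le.mp h2
    have h5 := hEV p.1 hp1
    rw [wf_re]
    linarith
  have hre1' := hreK' V₁ hE₁
  have hre2' := hreK' V₂ hE₂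
  have hre1 : ∀ p ∈ K', p.1 ∈ U ∧ 0 < (wf V₁ p).re :=
    fun p hp => ⟨(hre1' p hp).1, lt_of_lt_of_le (by positivity) (hre1' p hp).2⟩
  have hre2 : ∀ p ∈ K', p.1 ∈ U ∧ 0 < (wf V₂ p).re :=
    fun p hp => ⟨(hre2' p hp).1, lt_of_lt_of_le (by positivity) (hre2' p hp).2⟩
  have hre1K : ∀ p ∈ K, p.1 ∈ U ∧ 0 < (wf V₁ p).re := fun p hp => hre1 p (hKK' hp)
  have hre2K : ∀ p ∈ K, p.1 ∈ U ∧ 0 < (wf V₂ p).re := fun p hp => hre2 p (hKK' hp)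
  have hKU : ∀ p ∈ K, p.1 ∈ U := fun p hp => (hre1K p hp).1
  -- continuity of data
  have hV₁c : ContinuousOn V₁ U := hV₁.continuousOn
  have hV₂c : ContinuousOn V₂ U := hV₂.continuousOn
  have hr₀c : ContinuousOn r₀ U := hr₀.continuousOn
  have hV₁c' : ContinuousOn (deriv V₁) U :=
    hV₁.continuousOn_deriv_of_isOpen hUo (by exact_mod_cast le_top)
  have hV₂c' : ContinuousOn (deriv V₂) U :=
    hV₂.continuousOn_deriv_of_isOpen hUo (by exact_mod_cast le_top)
  have hr₀c' : ContinuousOn (deriv r₀) U :=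
    hr₀.continuousOn_deriv_of_isOpen hUo (by exact_mod_cast le_top)
  -- nonvanishing of the phase derivative
  have hDne : ∀ σ : ℝ, (σ = 1 ∨ σ = -1) → ∀ p ∈ K, Dfn V₁ V₂ σ p ≠ 0 := by
    intro σ hσ p hp hD0
    have hp1J : p.1 ∈ J := hp.1
    have h1 : sbf V₁ p ^ 2 = wf V₁ p := by simp only [sbf]; exact sq_cpow_half _
    have h2 : sbf V₂ p ^ 2 = wf V₂ p := by simp only [sbf]; exact sq_cpow_half _
    have hσ2 : ((σ:ℂ))^2 = 1 := by rcases hσ with h|h <;> subst h <;> norm_num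
    have hprod : (sbf V₁ p + (σ:ℂ) * sbf V₂ p) * (sbf V₁ p - (σ:ℂ) * sbf V₂ p)
        = wf V₁ p - wf V₂ p := by
      have e : (sbf V₁ p + (σ:ℂ)*sbf V₂ p) * (sbf V₁ p - (σ:ℂ)*sbf V₂ p)
          = sbf V₁ p^2 - (σ:ℂ)^2 * sbf V₂ p^2 := by ring
      rw [e, h1, h2, hσ2, one_mul]
    rw [Dfn] at hD0
    rw [hD0, zero_mul] at hprod
    have hVeq : V₁ p.1 = V₂ p.1 := by
      have e : wf V₁ p - wf V₂ p = ((V₂ p.1 : ℂ) - (V₁ p.1 : ℂ)) := by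
        simp only [wf]; ring
      rw [e] at hprod
      have := sub_eq_zero.mp hprod.symm
      exact_mod_cast this.symm
    have h0 : p.1 = 0 := (hcross p.1 (hJI hp1J)).mp hVeq
    have hle : p.1 ≤ -δ/2 := hp1J.2
    rw [h0] at hle; linarith
  -- joint continuity on K
  have cq1 : ContinuousOn (qf V₁) K := contOn_qf hV₁c hre1K
  have cq2 : ContinuousOn (qf V₂) K := contOn_qf hV₂c hre2K
  have cgf : ContinuousOn (gf r₀ V₁ V₂) K := by
    unfold gf
    exact ((contOn_coer hr₀c hKU).mul cq2).mul cq1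
  have cD : ∀ σ : ℝ, ContinuousOn (Dfn V₁ V₂ σ) K := by
    intro σ; unfold Dfn
    exact (contOn_sbf hV₁c hre1K).add (continuous_const.continuousOn.mul (contOn_sbf hV₂c hre2K))
  have cdD : ∀ σ : ℝ, ContinuousOn (dDfn V₁ V₂ σ) K := by
    intro σ; unfold dDfn
    exact (contOn_dsbf hV₁c hV₁c' hre1K).add
      (continuous_const.continuousOn.mul (contOn_dsbf hV₂c hV₂c' hre2K))
  have cdgf : ContinuousOn (dgf r₀ V₁ V₂) K := by
    unfold dgf
    exact (((contOn_coer hr₀c' hKU).mul cq2).add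
      ((contOn_coer hr₀c hKU).mul (contOn_dqf hV₂c hV₂c' hre2K))).mul cq1 |>.add
      (((contOn_coer hr₀c hKU).mul cq2).mul (contOn_dqf hV₁c hV₁c' hre1K))
  have cH : ∀ σ : ℝ, (σ = 1 ∨ σ = -1) → ContinuousOn (Hfn r₀ V₁ V₂ σ) K := by
    intro σ hσ; unfold Hfn
    exact cgf.div (continuous_const.continuousOn.mul (cD σ))
      (fun p hp => mul_ne_zero Complex.I_ne_zero (hDne σ hσ p hp))
  have cdH : ∀ σ : ℝ, (σ = 1 ∨ σ = -1) → ContinuousOn (dHfn r₀ V₁ V₂ σ) K := by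
    intro σ hσ; unfold dHfn
    exact ((cdgf.mul (continuous_const.continuousOn.mul (cD σ))).sub
      (cgf.mul (continuous_const.continuousOn.mul (cdD σ)))).div
      ((continuous_const.continuousOn.mul (cD σ)).pow 2)
      (fun p hp => pow_ne_zero _ (mul_ne_zero Complex.I_ne_zero (hDne σ hσ p hp)))
  -- compactness bounds
  obtain ⟨Ag, hAg⟩ := hKc.exists_bound_of_continuousOn cgf
  have hAg0 : 0 ≤ Ag := le_trans (norm_nonneg _) (hAg _ hKne)
  obtain ⟨Aq, hAq⟩ := hKc.exists_bound_of_continuousOn cq2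
  have hAq0 : 0 ≤ Aq := le_trans (norm_nonneg _) (hAq _ hKne)
  obtain ⟨AH1, hAH1⟩ := hKc.exists_bound_of_continuousOn (cH 1 (Or.inl rfl))
  obtain ⟨AH2, hAH2⟩ := hKc.exists_bound_of_continuousOn (cH (-1) (Or.inr rfl))
  obtain ⟨AH1', hAH1'⟩ := hKc.exists_bound_of_continuousOn (cdH 1 (Or.inl rfl))
  obtain ⟨AH2', hAH2'⟩ := hKc.exists_bound_of_continuousOn (cdH (-1) (Or.inr rfl))
  set AH : ℝ := max AH1 AH2 with hAHdef
  set AH' : ℝ := max AH1' AH2' with hAH'def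
  have hAH : ∀ σ : ℝ, (σ = 1 ∨ σ = -1) → ∀ p ∈ K, ‖Hfn r₀ V₁ V₂ σ p‖ ≤ AH := by
    intro σ hσ p hp
    rcases hσ with h|h <;> subst h
    · exact (hAH1 p hp).trans (le_max_left _ _)
    · exact (hAH2 p hp).trans (le_max_right _ _)
  have hAH' : ∀ σ : ℝ, (σ = 1 ∨ σ = -1) → ∀ p ∈ K, ‖dHfn r₀ V₁ V₂ σ p‖ ≤ AH' := by
    intro σ hσ p hp
    rcases hσ with h|h <;> subst h
    · exact (hAH1' p hp).trans (le_max_left _ _)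
    · exact (hAH2' p hp).trans (le_max_right _ _)
  have hAH0 : 0 ≤ AH := le_trans (norm_nonneg _) (hAH 1 (Or.inl rfl) _ hKne)
  have hAH'0 : 0 ≤ AH' := le_trans (norm_nonneg _) (hAH' 1 (Or.inl rfl) _ hKne)
  -- constants
  set κ₀ : ℝ := δ * L / (2*Real.sqrt (c/2)) with hκdef
  have hκ0 : 0 ≤ κ₀ := by positivity
  set Mexp : ℝ := Real.exp (2*κ₀) with hMdef
  have hMexp1 : (1:ℝ) ≤ Mexp := by
    rw [hMdef]; exact Real.one_le_exp (by positivity)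
  have hMexp0 : (0:ℝ) < Mexp := lt_of_lt_of_le one_pos hMexp1
  set Cε : ℝ := C₀*(2+C₀) with hCεdef
  have hCε0 : 0 ≤ Cε := by positivity
  set Cint : ℝ := 2*AH*Mexp + AH'*Mexp*δ + Ag*Mexp*Cε*δ with hCintdef
  have hCint0 : 0 ≤ Cint := by positivity
  set Bu : ℝ := Aq*Mexp*(1+C₀) with hBudef
  have hBu0 : 0 ≤ Bu := by positivity
  refine ⟨h₀, hh₀pos, Bu*Cint + 1, by positivity, ?_⟩
  rintro h ⟨hh0, hhh₀⟩ E hEE₀ s₂ hs₂ t₂ ht₂ u₁ u₂ ub₂ hu₁c hu₂c hub₂c _ _ _ hwkb₁ hwkb₂ hwkbb₂ _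
    x hx
  have hh1 : h ≤ 1 := hhh₀.trans hh₀le1
  have hEB : E ∈ B := by
    rw [hBdef]
    simp only [Metric.mem_closedBall, Complex.dist_eq]
    exact hEE₀.trans (by nlinarith)
  -- slices
  have hsliceK' : ∀ y ∈ Icc (-δ) δ, (y, E) ∈ K' := fun y hy => ⟨hy, hEB⟩
  have hsliceK : ∀ y ∈ J, (y, E) ∈ K := fun y hy => ⟨hy, hEB⟩
  have slice : ∀ (f : ℝ × ℂ → ℂ) (S : Set ℝ), ContinuousOn f (S ×ˢ ({E} : Set ℂ)) →
      ContinuousOn (fun t => f (t, E)) S := by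
    intro f S hf
    exact hf.comp ((continuous_id.prodMk continuous_const).continuousOn)
      (fun t ht => ⟨ht, rfl⟩)
  -- helper: uIcc in big interval
  have huIcc0 : ∀ y ∈ Icc (-δ) δ, uIcc (0:ℝ) y ⊆ Icc (-δ) δ := by
    intro y hy
    rw [uIcc]
    exact Icc_subset_Icc (le_inf (by linarith) hy.1) (sup_le (by linarith) hy.2)
  -- FTC for the phases
  have FTC : ∀ (V : ℝ → ℝ), ContDiffOn ℝ (⊤:ℕ∞) V U → (∀ y ∈ Icc (-δ) δ, c ≤ E₀ - V y) →
      ∀ y ∈ Icc (-δ) δ,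
        HasDerivAt (fun z => ∫ t in (0:ℝ)..z, sbf V (t, E)) (sbf V (y, E)) y := by
    intro V hV hEV y hy
    set O : Set ℝ := U ∩ V ⁻¹' (Iio E.re) with hOdef
    have hOo : IsOpen O := (hV.continuousOn).isOpen_inter_preimage hUo isOpen_Iio
    have hIO : Icc (-δ) δ ⊆ O := by
      intro t ht
      refine ⟨hIU ht, ?_⟩
      have h1 : c ≤ E₀ - V t := hEV t ht
      have h2 : |(E - (E₀:ℂ)).re| ≤ L*h₀ :=
        le_trans (Complex.abs_re_le_norm _) (hEE₀.trans (by nlinarith))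
      have h3 : (E - (E₀:ℂ)).re = E.re - E₀ := by simp
      rw [h3] at h2
      have h4 := abs_le.mp h2
      simp only [mem_preimage, mem_Iio]
      linarith
    have hreO : ∀ t ∈ O, 0 < (wf V (t, E)).re := by
      intro t ht; rw [wf_re]
      simp only [hOdef, mem_inter_iff, mem_preimage, mem_Iio] at ht
      linarith [ht.2]
    have hcont : ContinuousOn (fun t => sbf V (t, E)) O := by
      intro t ht
      have hin : ContinuousWithinAt (fun t : ℝ => E - (V t : ℂ)) O t :=
        (continuous_const.continuousOn.sub
          (Complex.continuous_ofReal.comp_continuousOn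
            ((hV.continuousOn).mono inter_subset_left))) t ht
      have := ContinuousAt.comp_continuousWithinAt
        (g := fun z : ℂ => z ^ ((1:ℂ)/2)) (x := t) (f := fun t : ℝ => E - (V t : ℂ))
        (continuousAt_cpow_const (Complex.mem_slitPlane_iff.mpr (Or.inl (hreO t ht)))) hin
      exact this
    exact intervalIntegral.integral_hasDerivAt_right
      ((hcont.mono ((huIcc0 y hy).trans hIO)).intervalIntegrable)
      (hcont.stronglyMeasurableAtFilter hOo y (hIO hy))
      (hcont.continuousAt (hOo.mem_nhds (hIO hy)))
  set φ₁ : ℝ → ℂ := fun z => ∫ t in (0:ℝ)..z, sbf V₁ (t, E) with hφ₁def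
  set φ₂ : ℝ → ℂ := fun z => ∫ t in (0:ℝ)..z, sbf V₂ (t, E) with hφ₂def
  have hφ₁d : ∀ y ∈ Icc (-δ) δ, HasDerivAt φ₁ (sbf V₁ (y, E)) y := FTC V₁ hV₁ hE₁
  have hφ₂d : ∀ y ∈ Icc (-δ) δ, HasDerivAt φ₂ (sbf V₂ (y, E)) y := FTC V₂ hV₂ hE₂
  have hφ₁cont : ContinuousOn φ₁ (Icc (-δ) δ) :=
    fun y hy => ((hφ₁d y hy).continuousAt).continuousWithinAt
  have hφ₂cont : ContinuousOn φ₂ (Icc (-δ) δ) :=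
    fun y hy => ((hφ₂d y hy).continuousAt).continuousWithinAt
  -- imaginary part of the phases is O(h)
  have hφim : ∀ (V : ℝ → ℝ), ContinuousOn V U → (∀ p ∈ K', p.1 ∈ U ∧ 0 < (wf V p).re) →
      (∀ p ∈ K', c/2 ≤ (wf V p).re) →
      ∀ y ∈ Icc (-δ) δ, |(∫ t in (0:ℝ)..y, sbf V (t, E)).im| ≤ κ₀ * h := by
    intro V hVc hreV hreV2 y hy
    have hcont : ContinuousOn (fun t => sbf V (t, E)) (Icc (-δ) δ) := by
      refine slice _ _ ((contOn_sbf hVc ?_).mono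
        (prod_mono Subset.rfl (singleton_subset_iff.2 hEB)))
      exact hreV
    have hint : IntervalIntegrable (fun t => sbf V (t, E)) volume 0 y :=
      (hcont.mono (huIcc0 y hy)).intervalIntegrable
    have him : (∫ t in (0:ℝ)..y, sbf V (t, E)).im
        = ∫ t in (0:ℝ)..y, (sbf V (t, E)).im := by
      have := Complex.imCLM.intervalIntegral_comp_comm hint
      simp only [Complex.imCLM_apply] at this
      exact this.symm
    rw [him]
    have hsq : (0:ℝ) < Real.sqrt (c/2) := Real.sqrt_pos.2 (by positivity)
    have hptw : ∀ t ∈ Set.uIoc (0:ℝ) y, ‖(sbf V (t, E)).im‖ ≤ L*h/(2*Real.sqrt (c/2)) := by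
      intro t ht
      have htI : t ∈ Icc (-δ) δ := (huIcc0 y hy) (Set.uIoc_subset_uIcc ht)
      have h1 := im_cpow_half_le (by positivity : (0:ℝ) < c/2)
        (hreV2 (t, E) (hsliceK' t htI))
      have h2 : (wf V (t, E)).im = E.im := wf_im V (t, E)
      have h3 : |E.im| ≤ L * h := by
        have := (Complex.abs_im_le_norm (E - (E₀:ℂ))).trans hEE₀
        simpa using this
      have h4 : |(sbf V (t, E)).im| ≤ |E.im| / (2 * Real.sqrt (c/2)) := by
        rw [sbf]; rw [h2] at h1; exact h1
      rw [Real.norm_eq_abs]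
      refine h4.trans ?_
      gcongr
    calc |∫ t in (0:ℝ)..y, (sbf V (t, E)).im|
        ≤ L*h/(2*Real.sqrt (c/2)) * |y - 0| :=
          intervalIntegral.norm_integral_le_of_norm_le_const hptw
      _ ≤ κ₀ * h := by
          have hy' : |y - 0| ≤ δ := by
            rw [sub_zero, abs_le]; exact ⟨by linarith [hy.1], hy.2⟩
          calc L*h/(2*Real.sqrt (c/2)) * |y - 0| ≤ L*h/(2*Real.sqrt (c/2)) * δ := by
                exact mul_le_mul_of_nonneg_left hy' (by positivity)
            _ = κ₀ * h := by rw [hκdef]; ring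
  have hφ₁im : ∀ y ∈ Icc (-δ) δ, |(φ₁ y).im| ≤ κ₀ * h :=
    hφim V₁ hV₁c hre1 (fun p hp => (hre1' p hp).2)
  have hφ₂im : ∀ y ∈ Icc (-δ) δ, |(φ₂ y).im| ≤ κ₀ * h :=
    hφim V₂ hV₂c hre2 (fun p hp => (hre2' p hp).2)
  -- basic exponential bound
  have hexp : ∀ θ : ℂ, |θ.im| ≤ 2*(κ₀*h) → ‖Complex.exp (Complex.I * θ / (h:ℂ))‖ ≤ Mexp := by
    intro θ hθ
    rw [Complex.norm_exp]
    have hre' : (Complex.I * θ / (h:ℂ)).re = -θ.im / h := by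
      rw [show ((h:ℂ)) = ((h:ℝ):ℂ) from rfl, Complex.div_ofReal_re]
      congr 1
      simp [Complex.mul_re]
    rw [hre', hMdef]
    apply Real.exp_le_exp.mpr
    rw [div_le_iff₀ hh0]
    nlinarith [neg_le_abs θ.im, hκ0]
  -- convert the WKB hypothesis for u₁
  have hwkb₁' : ∀ y ∈ Icc (-δ) δ,
      ‖u₁ y * wf V₁ (y, E) ^ ((1:ℂ)/4) *
        Complex.exp (-Complex.I * φ₁ y / (h:ℂ)) - 1‖ ≤ C₀ * h := by
    intro y hy
    have := hwkb₁ y hy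
    simpa only [hφ₁def, sbf, wf] using this
  -- the key estimate for one oscillatory integral
  have key : ∀ σ : ℝ, (σ = 1 ∨ σ = -1) → ∀ v : ℝ → ℂ, ContinuousOn v (Icc (-δ) δ) →
      (∀ y ∈ Icc (-δ) δ,
        ‖v y * wf V₂ (y, E) ^ ((1:ℂ)/4) *
          Complex.exp (-(σ:ℂ) * Complex.I * φ₂ y / (h:ℂ)) - 1‖ ≤ C₀ * h) →
      (∀ z ∈ J, ‖v z‖ ≤ Bu) ∧
        (∀ p ∈ J, ‖∫ y in p..x, (r₀ y : ℂ) * v y * u₁ y‖ ≤ Cint * h) := by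
    intro σ hσ v hvc hvwkb
    have hσabs : |σ| = 1 := by rcases hσ with hh|hh <;> subst hh <;> norm_num
    set A₂ : ℝ → ℂ := fun y => v y * wf V₂ (y, E) ^ ((1:ℂ)/4) *
      Complex.exp (-(σ:ℂ) * Complex.I * φ₂ y / (h:ℂ)) with hA₂def
    set A₁ : ℝ → ℂ := fun y => u₁ y * wf V₁ (y, E) ^ ((1:ℂ)/4) *
      Complex.exp (-Complex.I * φ₁ y / (h:ℂ)) with hA₁def
    set F : ℝ → ℂ := fun y => Complex.exp (Complex.I * (φ₁ y + (σ:ℂ) * φ₂ y) / (h:ℂ)) with hFdef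
    have hA₂n : ∀ y ∈ Icc (-δ) δ, ‖A₂ y‖ ≤ 1 + C₀ * h := by
      intro y hy
      have h1 := hvwkb y hy
      have h2 : ‖A₂ y‖ ≤ ‖A₂ y - 1‖ + ‖(1:ℂ)‖ := by
        simpa using norm_add_le (A₂ y - 1) 1
      rw [norm_one] at h2
      linarith
    have hFn : ∀ y ∈ Icc (-δ) δ, ‖F y‖ ≤ Mexp := by
      intro y hy
      rw [hFdef]
      apply hexp
      have h1 := hφ₁im y hy
      have h2 := hφ₂im y hy
      have him : (φ₁ y + (σ:ℂ) * φ₂ y).im = (φ₁ y).im + σ * (φ₂ y).im := by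
        simp [Complex.add_im, Complex.mul_im]
      rw [him]
      calc |(φ₁ y).im + σ * (φ₂ y).im| ≤ |(φ₁ y).im| + |σ * (φ₂ y).im| := abs_add_le _ _
        _ = |(φ₁ y).im| + |(φ₂ y).im| := by rw [abs_mul, hσabs, one_mul]
        _ ≤ 2*(κ₀*h) := by linarith
    have hexp₂ : ∀ y ∈ Icc (-δ) δ,
        ‖Complex.exp ((σ:ℂ) * Complex.I * φ₂ y / (h:ℂ))‖ ≤ Mexp := by
      intro y hy
      rw [show (σ:ℂ) * Complex.I * φ₂ y / (h:ℂ)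
        = Complex.I * ((σ:ℂ) * φ₂ y) / (h:ℂ) from by ring]
      apply hexp
      rw [show ((σ:ℂ) * φ₂ y).im = σ * (φ₂ y).im from by simp [Complex.mul_im],
        abs_mul, hσabs, one_mul]
      have := hφ₂im y hy
      nlinarith [mul_nonneg hκ0 hh0.le]
    have hvb : ∀ z ∈ J, ‖v z‖ ≤ Bu := by
      intro z hz
      have hzI := hJI hz
      have hq2ne : wf V₂ (z,E) ^ ((1:ℂ)/4) ≠ 0 :=
        cpow_ne_zero' (wf_ne (hre2 (z,E) (hsliceK' z hzI)).2) _
      have hid : v z = qf V₂ (z,E) *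
          Complex.exp ((σ:ℂ) * Complex.I * φ₂ z / (h:ℂ)) * A₂ z := by
        have e0 : Complex.exp ((σ:ℂ) * Complex.I * φ₂ z / (h:ℂ)) *
            Complex.exp (-(σ:ℂ) * Complex.I * φ₂ z / (h:ℂ)) = 1 := by
          rw [← Complex.exp_add, show (σ:ℂ) * Complex.I * φ₂ z / (h:ℂ)
            + -(σ:ℂ) * Complex.I * φ₂ z / (h:ℂ) = 0 from by ring, Complex.exp_zero]
        calc v z = v z * (((wf V₂ (z,E) ^ ((1:ℂ)/4))⁻¹ * wf V₂ (z,E) ^ ((1:ℂ)/4)) *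
              (Complex.exp ((σ:ℂ) * Complex.I * φ₂ z / (h:ℂ)) *
               Complex.exp (-(σ:ℂ) * Complex.I * φ₂ z / (h:ℂ)))) := by
              rw [inv_mul_cancel₀ hq2ne, e0]; ring
          _ = qf V₂ (z,E) * Complex.exp ((σ:ℂ) * Complex.I * φ₂ z / (h:ℂ)) * A₂ z := by
              simp only [hA₂def, qf]; ring
      rw [hid, hBudef, norm_mul, norm_mul]
      have e1 : ‖qf V₂ (z,E)‖ ≤ Aq := hAq _ (hsliceK z hz)
      have e2 := hexp₂ z hzI
      have e3 : ‖A₂ z‖ ≤ 1 + C₀ := by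
        have := hA₂n z hzI
        nlinarith
      have e4 : ‖qf V₂ (z,E)‖ * ‖Complex.exp ((σ:ℂ) * Complex.I * φ₂ z / (h:ℂ))‖
          ≤ Aq * Mexp := mul_le_mul e1 e2 (norm_nonneg _) hAq0
      exact mul_le_mul e4 e3 (norm_nonneg _) (by positivity)
    refine ⟨hvb, ?_⟩
    intro p hp
    have hpI := hJI hp
    have hxI := hJI hx
    have huIcc : uIcc p x ⊆ J := by
      rw [hJdef, uIcc]
      exact Icc_subset_Icc (le_inf hp.1 hx.1) (sup_le hp.2 hx.2)
    have hmain : ∀ y ∈ Icc (-δ) δ,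
        (r₀ y:ℂ) * v y * u₁ y = gf r₀ V₁ V₂ (y,E) * F y * (A₂ y * A₁ y) := by
      intro y hy
      have h2ne : wf V₂ (y,E) ^ ((1:ℂ)/4) ≠ 0 :=
        cpow_ne_zero' (wf_ne (hre2 (y,E) (hsliceK' y hy)).2) _
      have h1ne : wf V₁ (y,E) ^ ((1:ℂ)/4) ≠ 0 :=
        cpow_ne_zero' (wf_ne (hre1 (y,E) (hsliceK' y hy)).2) _
      have e0 : F y * (Complex.exp (-(σ:ℂ) * Complex.I * φ₂ y / (h:ℂ))
          * Complex.exp (-Complex.I * φ₁ y / (h:ℂ))) = 1 := by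
        rw [hFdef]
        rw [← Complex.exp_add, ← Complex.exp_add,
          show Complex.I * (φ₁ y + (σ:ℂ) * φ₂ y) / (h:ℂ) +
            (-(σ:ℂ) * Complex.I * φ₂ y / (h:ℂ) + -Complex.I * φ₁ y / (h:ℂ)) = 0 from by ring,
          Complex.exp_zero]
      calc (r₀ y:ℂ) * v y * u₁ y
          = ((r₀ y:ℂ) * v y * u₁ y) *
            (((wf V₂ (y,E) ^ ((1:ℂ)/4))⁻¹ * wf V₂ (y,E) ^ ((1:ℂ)/4)) *
             ((wf V₁ (y,E) ^ ((1:ℂ)/4))⁻¹ * wf V₁ (y,E) ^ ((1:ℂ)/4)) *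
             (F y * (Complex.exp (-(σ:ℂ) * Complex.I * φ₂ y / (h:ℂ)) *
                Complex.exp (-Complex.I * φ₁ y / (h:ℂ))))) := by
            rw [inv_mul_cancel₀ h2ne, inv_mul_cancel₀ h1ne, e0]; ring
        _ = gf r₀ V₁ V₂ (y,E) * F y * (A₂ y * A₁ y) := by
            simp only [gf, qf, hA₂def, hA₁def]; ring
    have herr : ∀ y ∈ J,
        ‖(r₀ y:ℂ) * v y * u₁ y - gf r₀ V₁ V₂ (y,E) * F y‖ ≤ Ag * Mexp * (Cε * h) := by
      intro y hy
      have hyI := hJI hy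
      have e1 : (r₀ y:ℂ) * v y * u₁ y - gf r₀ V₁ V₂ (y,E) * F y
          = gf r₀ V₁ V₂ (y,E) * F y * (A₂ y * A₁ y - 1) := by
        rw [hmain y hyI]; ring
      rw [e1]
      have hA : ‖A₂ y * A₁ y - 1‖ ≤ Cε * h := by
        have e2 : A₂ y * A₁ y - 1 = A₂ y * (A₁ y - 1) + (A₂ y - 1) := by ring
        rw [e2, hCεdef]
        have a2 := hA₂n y hyI
        have a1 := hwkb₁' y hyI
        have a2' := hvwkb y hyI
        have a3 : ‖A₂ y * (A₁ y - 1)‖ ≤ (1 + C₀*h) * (C₀*h) := by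
          rw [norm_mul]
          exact mul_le_mul a2 a1 (norm_nonneg _) (by positivity)
        calc ‖A₂ y * (A₁ y - 1) + (A₂ y - 1)‖
            ≤ ‖A₂ y * (A₁ y - 1)‖ + ‖A₂ y - 1‖ := norm_add_le _ _
          _ ≤ (1 + C₀*h)*(C₀*h) + C₀*h := add_le_add a3 a2'
          _ ≤ C₀*(2+C₀) * h := by
              nlinarith [mul_nonneg (mul_nonneg (mul_nonneg hC₀.le hC₀.le) hh0.le)
                (sub_nonneg.mpr hh1)]
      rw [norm_mul, norm_mul]
      have e5 : ‖gf r₀ V₁ V₂ (y,E)‖ * ‖F y‖ ≤ Ag * Mexp :=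
        mul_le_mul (hAg _ (hsliceK y hy)) (hFn y hyI) (norm_nonneg _) hAg0
      exact mul_le_mul e5 hA (norm_nonneg _) (by positivity)
    have hUy : ∀ y ∈ J, y ∈ U := fun y hy => hIU (hJI hy)
    have hhc : (h:ℂ) ≠ 0 := by exact_mod_cast hh0.ne'
    set Q : ℝ → ℂ := fun y => Hfn r₀ V₁ V₂ σ (y,E) * F y with hQdef
    have hQd : ∀ y ∈ J, HasDerivAt Q
        (dHfn r₀ V₁ V₂ σ (y,E) * F y + gf r₀ V₁ V₂ (y,E) / (h:ℂ) * F y) y := by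
      intro y hy
      have hyI := hJI hy
      have hyK : (y,E) ∈ K := hsliceK y hy
      have hre1y : 0 < (wf V₁ (y,E)).re := (hre1 (y,E) (hsliceK' y hyI)).2
      have hre2y : 0 < (wf V₂ (y,E)).re := (hre2 (y,E) (hsliceK' y hyI)).2
      have hyU : y ∈ U := hUy y hy
      have hq1' := hasDerivAt_qf hUo hV₁ hyU hre1y
      have hq2' := hasDerivAt_qf hUo hV₂ hyU hre2y
      have hsb1' := hasDerivAt_sbf hUo hV₁ hyU hre1y
      have hsb2' := hasDerivAt_sbf hUo hV₂ hyU hre2y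
      have hr' : HasDerivAt (fun t => ((r₀ t : ℝ):ℂ)) (Complex.ofReal (deriv r₀ y)) y :=
        HasDerivAt.ofReal_comp
          (((hr₀.differentiableOn (by simp)).differentiableAt
            (hUo.mem_nhds hyU)).hasDerivAt)
      have hg' : HasDerivAt (fun t => gf r₀ V₁ V₂ (t,E)) (dgf r₀ V₁ V₂ (y,E)) y := by
        have := (hr'.mul hq2').mul hq1'
        simpa only [gf, dgf, Pi.mul_def] using this
      have hD' : HasDerivAt (fun t => Dfn V₁ V₂ σ (t,E)) (dDfn V₁ V₂ σ (y,E)) y := by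
        have := hsb1'.add (hsb2'.const_mul ((σ:ℂ)))
        simpa only [Dfn, dDfn, Pi.add_def] using this
      have hIDne : Complex.I * Dfn V₁ V₂ σ (y,E) ≠ 0 :=
        mul_ne_zero Complex.I_ne_zero (hDne σ hσ (y,E) hyK)
      have hH' : HasDerivAt (fun t => Hfn r₀ V₁ V₂ σ (t,E)) (dHfn r₀ V₁ V₂ σ (y,E)) y := by
        have := hg'.div (hD'.const_mul Complex.I) hIDne
        simpa only [Hfn, dHfn, Pi.div_def] using this
      have hθ' : HasDerivAt (fun t => Complex.I * (φ₁ t + (σ:ℂ) * φ₂ t) / (h:ℂ))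
          (Complex.I * Dfn V₁ V₂ σ (y,E) / (h:ℂ)) y := by
        have := (((hφ₁d y hyI).add ((hφ₂d y hyI).const_mul ((σ:ℂ)))).const_mul
          Complex.I).div_const (h:ℂ)
        simpa only [Dfn, Pi.add_def] using this
      have hF' : HasDerivAt F (F y * (Complex.I * Dfn V₁ V₂ σ (y,E) / (h:ℂ))) y := by
        rw [hFdef]
        exact hθ'.cexp
      have hQ' := hH'.mul hF'
      have efix : Hfn r₀ V₁ V₂ σ (y,E) * (F y * (Complex.I * Dfn V₁ V₂ σ (y,E) / (h:ℂ)))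
          = gf r₀ V₁ V₂ (y,E) / (h:ℂ) * F y := by
        simp only [Hfn]
        have hD0 := hDne σ hσ (y,E) hyK
        field_simp
      rw [hQdef]
      refine hQ'.congr_deriv ?_
      rw [efix]
    have cFJ : ContinuousOn F J := by
      rw [hFdef]
      apply Complex.continuous_exp.comp_continuousOn
      apply ContinuousOn.div_const
      exact continuous_const.continuousOn.mul
        ((hφ₁cont.mono hJI).add (continuous_const.continuousOn.mul (hφ₂cont.mono hJI)))
    have hsubK : (J ×ˢ ({E} : Set ℂ)) ⊆ K :=
      prod_mono Subset.rfl (singleton_subset_iff.2 hEB)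
    have cHJ : ContinuousOn (fun y => Hfn r₀ V₁ V₂ σ (y,E)) J :=
      slice _ _ ((cH σ hσ).mono hsubK)
    have cdHJ : ContinuousOn (fun y => dHfn r₀ V₁ V₂ σ (y,E)) J :=
      slice _ _ ((cdH σ hσ).mono hsubK)
    have cgfJ : ContinuousOn (fun y => gf r₀ V₁ V₂ (y,E)) J :=
      slice _ _ (cgf.mono hsubK)
    have ctot : ContinuousOn (fun y => (r₀ y:ℂ) * v y * u₁ y) J :=
      ((Complex.continuous_ofReal.comp_continuousOn (hr₀c.mono hUy)).mul
        (hvc.mono hJI)).mul (hu₁c.mono hJI)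
    have hint_tot : IntervalIntegrable (fun y => (r₀ y:ℂ) * v y * u₁ y) volume p x :=
      (ctot.mono huIcc).intervalIntegrable
    have hint_gfF : IntervalIntegrable (fun y => gf r₀ V₁ V₂ (y,E) * F y) volume p x :=
      ((cgfJ.mul cFJ).mono huIcc).intervalIntegrable
    have hint_dHF : IntervalIntegrable (fun y => dHfn r₀ V₁ V₂ σ (y,E) * F y) volume p x :=
      ((cdHJ.mul cFJ).mono huIcc).intervalIntegrable
    have hint_gfhF : IntervalIntegrable
        (fun y => gf r₀ V₁ V₂ (y,E) / (h:ℂ) * F y) volume p x :=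
      (((cgfJ.div_const _).mul cFJ).mono huIcc).intervalIntegrable
    have hIBP : (∫ y in p..x, (dHfn r₀ V₁ V₂ σ (y,E) * F y
        + gf r₀ V₁ V₂ (y,E)/(h:ℂ) * F y)) = Q x - Q p :=
      intervalIntegral.integral_eq_sub_of_hasDerivAt
        (fun y hy => hQd y (huIcc hy)) (hint_dHF.add hint_gfhF)
    have hsplit : (∫ y in p..x, dHfn r₀ V₁ V₂ σ (y,E) * F y)
        + (∫ y in p..x, gf r₀ V₁ V₂ (y,E)/(h:ℂ) * F y) = Q x - Q p := by
      rw [← intervalIntegral.integral_add hint_dHF hint_gfhF]; exact hIBP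
    have hmulh : (∫ y in p..x, gf r₀ V₁ V₂ (y,E) * F y)
        = (h:ℂ) * ∫ y in p..x, gf r₀ V₁ V₂ (y,E)/(h:ℂ) * F y := by
      rw [← intervalIntegral.integral_const_mul]
      apply intervalIntegral.integral_congr
      intro y hy
      field_simp
    have hxp : |x - p| ≤ δ := by
      rw [abs_le]
      constructor
      · have := hx.1; have := hp.2; linarith
      · have := hx.2; have := hp.1; linarith
    have hQb : ∀ z ∈ J, ‖Q z‖ ≤ AH * Mexp := by
      intro z hz
      rw [hQdef, norm_mul]
      exact mul_le_mul (hAH σ hσ _ (hsliceK z hz)) (hFn z (hJI hz)) (norm_nonneg _) hAH0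
    have hdHFb : ‖∫ y in p..x, dHfn r₀ V₁ V₂ σ (y,E) * F y‖ ≤ AH' * Mexp * δ := by
      have h1 : ∀ y ∈ Set.uIoc p x, ‖dHfn r₀ V₁ V₂ σ (y,E) * F y‖ ≤ AH' * Mexp := by
        intro y hy
        have hyJ : y ∈ J := huIcc (uIoc_subset_uIcc hy)
        rw [norm_mul]
        exact mul_le_mul (hAH' σ hσ _ (hsliceK y hyJ)) (hFn y (hJI hyJ))
          (norm_nonneg _) hAH'0
      calc ‖∫ y in p..x, dHfn r₀ V₁ V₂ σ (y,E) * F y‖ ≤ (AH'*Mexp) * |x - p| :=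
            intervalIntegral.norm_integral_le_of_norm_le_const h1
        _ ≤ AH'*Mexp*δ := mul_le_mul_of_nonneg_left hxp (by positivity)
    have hgfFb : ‖∫ y in p..x, gf r₀ V₁ V₂ (y,E) * F y‖
        ≤ (2*AH*Mexp + AH'*Mexp*δ) * h := by
      have heq : (∫ y in p..x, gf r₀ V₁ V₂ (y,E)/(h:ℂ) * F y)
          = Q x - Q p - ∫ y in p..x, dHfn r₀ V₁ V₂ σ (y,E) * F y := by
        linear_combination hsplit
      rw [hmulh, heq, norm_mul, Complex.norm_real, Real.norm_eq_abs, abs_of_pos hh0]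
      have h2 : ‖Q x - Q p - ∫ y in p..x, dHfn r₀ V₁ V₂ σ (y,E) * F y‖
          ≤ AH*Mexp + AH*Mexp + AH'*Mexp*δ := by
        refine (norm_sub_le _ _).trans ?_
        have h3 := (norm_sub_le (Q x) (Q p)).trans (add_le_add (hQb x hx) (hQb p hp))
        linarith [hdHFb]
      calc h * ‖Q x - Q p - ∫ y in p..x, dHfn r₀ V₁ V₂ σ (y,E) * F y‖
          ≤ h * (AH*Mexp + AH*Mexp + AH'*Mexp*δ) := by
            exact mul_le_mul_of_nonneg_left h2 hh0.le
        _ = (2*AH*Mexp + AH'*Mexp*δ) * h := by ring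
    have herrInt : ‖∫ y in p..x, ((r₀ y:ℂ) * v y * u₁ y - gf r₀ V₁ V₂ (y,E) * F y)‖
        ≤ Ag*Mexp*(Cε*h)*δ := by
      have h1 : ∀ y ∈ Set.uIoc p x, ‖(r₀ y:ℂ) * v y * u₁ y - gf r₀ V₁ V₂ (y,E) * F y‖
          ≤ Ag*Mexp*(Cε*h) := fun y hy => herr y (huIcc (uIoc_subset_uIcc hy))
      calc ‖∫ y in p..x, ((r₀ y:ℂ) * v y * u₁ y - gf r₀ V₁ V₂ (y,E) * F y)‖
          ≤ (Ag*Mexp*(Cε*h)) * |x - p| :=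
            intervalIntegral.norm_integral_le_of_norm_le_const h1
        _ ≤ Ag*Mexp*(Cε*h)*δ := mul_le_mul_of_nonneg_left hxp (by positivity)
    have hdecomp : (∫ y in p..x, (r₀ y:ℂ) * v y * u₁ y)
        = (∫ y in p..x, gf r₀ V₁ V₂ (y,E) * F y)
          + ∫ y in p..x, ((r₀ y:ℂ) * v y * u₁ y - gf r₀ V₁ V₂ (y,E) * F y) := by
      rw [← intervalIntegral.integral_add hint_gfF (hint_tot.sub hint_gfF)]
      apply intervalIntegral.integral_congr
      intro y hy
      ring
    rw [hdecomp]
    calc ‖(∫ y in p..x, gf r₀ V₁ V₂ (y,E) * F y)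
          + ∫ y in p..x, ((r₀ y:ℂ) * v y * u₁ y - gf r₀ V₁ V₂ (y,E) * F y)‖
        ≤ ‖∫ y in p..x, gf r₀ V₁ V₂ (y,E) * F y‖
          + ‖∫ y in p..x, ((r₀ y:ℂ) * v y * u₁ y - gf r₀ V₁ V₂ (y,E) * F y)‖ :=
          norm_add_le _ _
      _ ≤ (2*AH*Mexp + AH'*Mexp*δ) * h + Ag*Mexp*(Cε*h)*δ := add_le_add hgfFb herrInt
      _ = Cint * h := by rw [hCintdef]; ring
  -- instantiate for u₂ and ub₂
  have hwkb₂' : ∀ y ∈ Icc (-δ) δ,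
      ‖u₂ y * wf V₂ (y, E) ^ ((1:ℂ)/4) *
        Complex.exp (-((1:ℝ):ℂ) * Complex.I * φ₂ y / (h:ℂ)) - 1‖ ≤ C₀ * h := by
    intro y hy
    have := hwkb₂ y hy
    simpa only [hφ₂def, sbf, wf, Complex.ofReal_one, neg_mul,
      one_mul] using this
  have hwkbb₂' : ∀ y ∈ Icc (-δ) δ,
      ‖ub₂ y * wf V₂ (y, E) ^ ((1:ℂ)/4) *
        Complex.exp (-(((-1):ℝ):ℂ) * Complex.I * φ₂ y / (h:ℂ)) - 1‖ ≤ C₀ * h := by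
    intro y hy
    have := hwkbb₂ y hy
    simpa only [hφ₂def, sbf, wf, Complex.ofReal_neg,
      Complex.ofReal_one, neg_neg, neg_mul, one_mul] using this
  obtain ⟨hBu₂, hInt₂⟩ := key 1 (Or.inl rfl) u₂ hu₂c hwkb₂'
  obtain ⟨hBub, hIntb⟩ := key (-1) (Or.inr rfl) ub₂ hub₂c hwkbb₂'
  have hn1 : ‖(Complex.I/2 : ℂ)‖ = 1/2 := by
    simp
  calc ‖(Complex.I / 2) * (ub₂ x * (∫ y in s₂..x, (r₀ y : ℂ) * u₂ y * u₁ y) -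
          u₂ x * (∫ y in t₂..x, (r₀ y : ℂ) * ub₂ y * u₁ y))‖
      = (1/2) * ‖ub₂ x * (∫ y in s₂..x, (r₀ y : ℂ) * u₂ y * u₁ y) -
          u₂ x * (∫ y in t₂..x, (r₀ y : ℂ) * ub₂ y * u₁ y)‖ := by
        rw [norm_mul, hn1]
    _ ≤ (1/2) * (‖ub₂ x‖ * ‖∫ y in s₂..x, (r₀ y : ℂ) * u₂ y * u₁ y‖
          + ‖u₂ x‖ * ‖∫ y in t₂..x, (r₀ y : ℂ) * ub₂ y * u₁ y‖) := by
        apply mul_le_mul_of_nonneg_left _ (by norm_num)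
        refine (norm_sub_le _ _).trans ?_
        rw [norm_mul, norm_mul]
    _ ≤ (1/2) * (Bu*(Cint*h) + Bu*(Cint*h)) := by
        have b1 := mul_le_mul (hBub x hx) (hInt₂ s₂ hs₂) (norm_nonneg _) hBu0
        have b2 := mul_le_mul (hBu₂ x hx) (hIntb t₂ ht₂) (norm_nonneg _) hBu0
        exact mul_le_mul_of_nonneg_left (add_le_add b1 b2) (by norm_num)
    _ = Bu*Cint*h := by ring
    _ ≤ (Bu*Cint + 1)*h := by nlinarith
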